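/- Let (Q,H) be a loop-free quiver with reduced homotopy and let k be a vertex of Q. Write (Q♥,H♥) = μ_k(μ_k(Q,H)) for the twofold mutation at k. Then there exists a quiver isomorphism η: Q♥ → Q fixing the vertex set Q♥₀ = Q₀ whose induced isomorphism of free groupoids sends H♥ onto H. In particular, mutation of quivers with reduced homotopies is an involution up to vertex-fixing isomorphism. -/

import Mathlib

namespace CMu

/-- A (locally small) quiver with vertex type `V`: a type of arrows together with
source and target maps.  All quivers in a given statement share the vertex type. -/
structure Quiv (V : Type) where
  Arrow : Type
  src : Arrow → V
  tgt : Arrow → V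

variable {V : Type}

namespace Quiv

/-- A quiver is loop-free if no arrow has equal source and target. -/
def LoopFree (Q : Quiv V) : Prop := ∀ a : Q.Arrow, Q.src a ≠ Q.tgt a

/-- A quiver is `2`-acyclic if it contains no oriented `2`-cycle, i.e. there is no pair of
arrows `a, b` with `t a = s b` and `t b = s a` (a loop forms a `2`-cycle with itself). -/
def TwoAcyclic (Q : Quiv V) : Prop :=
  ∀ a b : Q.Arrow, Q.tgt a = Q.src b → Q.tgt b = Q.src a → False

/-- A quiver is locally finite if each vertex is the source (resp. target) of only
finitely many arrows. -/
def LocallyFinite (Q : Quiv V) : Prop :=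
  ∀ v : V, {a : Q.Arrow | Q.src a = v}.Finite ∧ {a : Q.Arrow | Q.tgt a = v}.Finite

/-- The number of arrows from `i` to `j`. -/
noncomputable def nArrows (Q : Quiv V) (i j : V) : ℕ :=
  Nat.card {a : Q.Arrow // Q.src a = i ∧ Q.tgt a = j}

end Quiv

/-- A step of a walk in the underlying graph of a quiver: an arrow traversed forwards,
or an arrow traversed backwards (its formal inverse). -/
inductive Step (Q : Quiv V) : V → V → Type where
  | fwd (a : Q.Arrow) : Step Q (Q.src a) (Q.tgt a)
  | bwd (a : Q.Arrow) : Step Q (Q.tgt a) (Q.src a)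

/-- The inverse of a step. -/
def Step.inv {Q : Quiv V} : {x y : V} → Step Q x y → Step Q y x
  | _, _, .fwd a => .bwd a
  | _, _, .bwd a => .fwd a

/-- A step is forward if it traverses an arrow in its own direction. -/
def Step.IsFwd {Q : Quiv V} : {x y : V} → Step Q x y → Prop
  | _, _, .fwd _ => True
  | _, _, .bwd _ => False

/-- A walk in (the underlying graph of) a quiver `Q` from `x` to `y`:
a word in the arrows of `Q` and their formal inverses. -/
inductive Walk (Q : Quiv V) : V → V → Type where
  | nil (v : V) : Walk Q v v
  | cons {x y z : V} (e : Step Q x y) (w : Walk Q y z) : Walk Q x z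

namespace Walk

/-- Composition (concatenation) of walks. -/
def comp {Q : Quiv V} : {x y z : V} → Walk Q x y → Walk Q y z → Walk Q x z
  | _, _, _, .nil _, w => w
  | _, _, _, .cons e u, w => .cons e (comp u w)

/-- The walk consisting of a single step. -/
def single {Q : Quiv V} {x y : V} (e : Step Q x y) : Walk Q x y := .cons e (.nil _)

/-- The inverse (reversal) of a walk. -/
def inv {Q : Quiv V} : {x y : V} → Walk Q x y → Walk Q y x
  | _, _, .nil v => .nil v
  | _, _, .cons e u => (inv u).comp (single e.inv)

/-- Transport a walk along equalities of its endpoints. -/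
def cast {Q : Quiv V} {x y x' y' : V} (hx : x = x') (hy : y = y') (w : Walk Q x y) :
    Walk Q x' y' := by subst hx; subst hy; exact w

/-- A walk is a (directed) path if all of its steps are forward. -/
def AllFwd {Q : Quiv V} : {x y : V} → Walk Q x y → Prop
  | _, _, .nil _ => True
  | _, _, .cons e w => e.IsFwd ∧ AllFwd w

end Walk

/-- A quiver is acyclic if it contains no (nontrivial) oriented cycle. -/
def Quiv.Acyclic (Q : Quiv V) : Prop :=
  ∀ (v : V) (w : Walk Q v v), w.AllFwd → w = .nil v

/-- A quiver is connected if any two vertices are joined by a walk. -/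
def Quiv.Connected (Q : Quiv V) : Prop := ∀ x y : V, Nonempty (Walk Q x y)

/-- Free homotopy of walks: the equivalence relation on walks generated by cancelling
`e ⬝ e⁻¹`.  Two walks are homotopic iff they have the same reduction, so that the morphisms
of the free groupoid `π(Q)` from `x` to `y` are the homotopy classes of walks from `x` to `y`. -/
inductive WalkHtpy (Q : Quiv V) : {x y : V} → Walk Q x y → Walk Q x y → Prop
  | refl {x y : V} (w : Walk Q x y) : WalkHtpy Q w w
  | symm {x y : V} {w u : Walk Q x y} : WalkHtpy Q w u → WalkHtpy Q u w
  | trans {x y : V} {w u t : Walk Q x y} : WalkHtpy Q w u → WalkHtpy Q u t → WalkHtpy Q w t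
  | cancel {x y z : V} (e : Step Q x y) (w : Walk Q x z) :
      WalkHtpy Q (.cons e (.cons e.inv w)) w
  | congr {x y z : V} (e : Step Q x y) {w u : Walk Q y z} :
      WalkHtpy Q w u → WalkHtpy Q (.cons e w) (.cons e u)

/-- A family of sets of cyclic walks, one at each vertex.  Such a family, when it satisfies
`IsHomotopy`, encodes a normal subgroupoid (a *homotopy*) `H` of the free groupoid `π(Q)`:
`H(v,v)` is the set of homotopy classes of the walks in the family at `v`. -/
def HSet (Q : Quiv V) := ∀ v : V, Set (Walk Q v v)

/-- `H` is a homotopy on `Q` (a normal subgroupoid of the free groupoid `π(Q)`):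
each `H v` is closed under free homotopy of walks, contains the identity, is closed under
composition and inverse (so it determines a subgroup of `π₁(Q,v) = π(Q)(v,v)`), and the family
is closed under conjugation by arbitrary walks. -/
structure IsHomotopy (Q : Quiv V) (H : HSet Q) : Prop where
  htpy_mem : ∀ {v : V} {w u : Walk Q v v}, WalkHtpy Q w u → w ∈ H v → u ∈ H v
  nil_mem : ∀ v : V, Walk.nil v ∈ H v
  comp_mem : ∀ {v : V} {w u : Walk Q v v}, w ∈ H v → u ∈ H v → w.comp u ∈ H v
  inv_mem : ∀ {v : V} {w : Walk Q v v}, w ∈ H v → w.inv ∈ H v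
  conj_mem : ∀ {x y : V} (g : Walk Q x y) {w : Walk Q x x},
    w ∈ H x → (g.inv.comp (w.comp g)) ∈ H y

/-- The oriented `2`-cycle determined by arrows `a : i → j` and `b : j → i`, as a cyclic
walk based at `i = s a`. -/
def twoCycle {Q : Quiv V} (a b : Q.Arrow) (h : Q.tgt a = Q.src b) (h' : Q.tgt b = Q.src a) :
    Walk Q (Q.src a) (Q.src a) :=
  Walk.cons (.fwd a) ((Walk.single (.fwd b)).cast h.symm h')

/-- A homotopy is reduced if it contains no oriented `2`-cycle of `Q`. -/
def IsReducedH (Q : Quiv V) (H : HSet Q) : Prop :=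
  ∀ (a b : Q.Arrow) (h : Q.tgt a = Q.src b) (h' : Q.tgt b = Q.src a),
    twoCycle a b h h' ∉ H (Q.src a)

/-- Two walks `w, u : x → y` represent the same morphism of the quotient groupoid
`π(Q)/H` iff `w⁻¹ u ∈ H`. -/
def HEquiv {Q : Quiv V} (H : HSet Q) {x y : V} (w u : Walk Q x y) : Prop :=
  w.inv.comp u ∈ H y

/-- The trivial homotopy `𝟙`: only the identity morphisms, i.e. only walks homotopic
to the constant walk. -/
def trivH (Q : Quiv V) : HSet Q := fun v => {w | WalkHtpy Q w (.nil v)}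

/-- The maximal homotopy `π(Q)`: all cyclic walks. -/
def maxH (Q : Quiv V) : HSet Q := fun _ => Set.univ

/-- The normal subgroupoid (homotopy) generated by a family `S` of cyclic walks. -/
def genH (Q : Quiv V) (S : HSet Q) : HSet Q := fun v =>
  {w | ∀ K : HSet Q, IsHomotopy Q K → (∀ x, S x ⊆ K x) → w ∈ K v}

/-- The squares of all cyclic walks; `genH Q (sqGens Q)` is the normal subgroupoid `π(Q)²`. -/
def sqGens (Q : Quiv V) : HSet Q := fun v => {w | ∃ u : Walk Q v v, w = u.comp u}

/-- A morphism from the free groupoid on `Q` to the free groupoid on `R` (both over the same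
vertex type, fixing all vertices), given by a choice of a walk in `R` for every arrow of `Q`. -/
structure QMap (Q R : Quiv V) where
  toWalk : (a : Q.Arrow) → Walk R (Q.src a) (Q.tgt a)

namespace QMap

/-- The image of a step. -/
def mapStep {Q R : Quiv V} (F : QMap Q R) : {x y : V} → Step Q x y → Walk R x y
  | _, _, .fwd a => F.toWalk a
  | _, _, .bwd a => (F.toWalk a).inv

/-- The induced map on walks. -/
def mapWalk {Q R : Quiv V} (F : QMap Q R) : {x y : V} → Walk Q x y → Walk R x y
  | _, _, .nil v => .nil v
  | _, _, .cons e w => (F.mapStep e).comp (F.mapWalk w)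

/-- Composition of `QMap`s. -/
def comp {Q R S : Quiv V} (F : QMap Q R) (G : QMap R S) : QMap Q S :=
  ⟨fun a => G.mapWalk (F.toWalk a)⟩

end QMap

/-- The kernel, relative to a homotopy `H` on `R`, of the functor `π(Q) → π(R)/H`
induced by a `QMap`: all cyclic walks whose image lies in `H`. -/
def kerH {Q R : Quiv V} (F : QMap Q R) (H : HSet R) : HSet Q :=
  fun v => {w | F.mapWalk w ∈ H v}

/-- A (vertex-fixing) isomorphism of quivers over the same vertex type. -/
structure QIso (Q R : Quiv V) where
  arr : Q.Arrow ≃ R.Arrow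
  src_eq : ∀ a, R.src (arr a) = Q.src a
  tgt_eq : ∀ a, R.tgt (arr a) = Q.tgt a

/-- The `QMap` underlying a quiver isomorphism. -/
def QIso.toQMap {Q R : Quiv V} (f : QIso Q R) : QMap Q R :=
  ⟨fun a => (Walk.single (.fwd (f.arr a))).cast (f.src_eq a) (f.tgt_eq a)⟩

/-- The pre-mutation `μ̃_k(Q)` of a loop-free quiver `Q` at the vertex `k`: arrows of `Q` not
incident to `k` are kept, arrows incident to `k` are replaced by reversed arrows `γ*`, and
for every pair of arrows `α, β` with `s α = t β = k` and `s β ≠ t α` a new composite arrow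
`[αβ] : s β → t α` is added. -/
def preMut (Q : Quiv V) (k : V) : Quiv V where
  Arrow := {a : Q.Arrow // Q.src a ≠ k ∧ Q.tgt a ≠ k} ⊕
    ({a : Q.Arrow // Q.src a = k ∨ Q.tgt a = k} ⊕
     {p : Q.Arrow × Q.Arrow // Q.src p.1 = k ∧ Q.tgt p.2 = k ∧ Q.src p.2 ≠ Q.tgt p.1})
  src x := match x with
    | .inl a => Q.src a.1
    | .inr (.inl a) => Q.tgt a.1
    | .inr (.inr p) => Q.src p.1.2
  tgt x := match x with
    | .inl a => Q.tgt a.1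
    | .inr (.inl a) => Q.src a.1
    | .inr (.inr p) => Q.tgt p.1.1

/-- The canonical functor `φ : π(μ̃_k Q) → π(Q)` (to be composed with `π(Q) → π(Q)/H`):
it fixes all vertices, sends a kept arrow `γ` to `γ`, a reversed arrow `γ*` to `γ⁻¹`, and a
composite arrow `[αβ]` to the walk `αβ`. -/
def phiQMap (Q : Quiv V) (k : V) : QMap (preMut Q k) Q where
  toWalk x := match x with
    | .inl a => Walk.single (.fwd a.1)
    | .inr (.inl a) => Walk.single (.bwd a.1)
    | .inr (.inr p) => Walk.cons (.fwd p.1.2)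
        ((Walk.single (.fwd p.1.1)).cast (p.2.1.trans p.2.2.1.symm) rfl)

/-- The homotopy `H' = ker (φ : π(μ̃_k Q) → π(Q)/H)` of the pre-mutation `μ̃_k(Q,H) = (Q',H')`. -/
def preH (Q : Quiv V) (H : HSet Q) (k : V) : HSet (preMut Q k) := kerH (phiQMap Q k) H

/-- The subquiver of `R` obtained by deleting the arrows in `S`. -/
def restrictQ (R : Quiv V) (S : Set R.Arrow) : Quiv V where
  Arrow := {a : R.Arrow // a ∉ S}
  src a := R.src a.1
  tgt a := R.tgt a.1

/-- The inclusion `QMap` of a subquiver. -/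
def inclQMap (R : Quiv V) (S : Set R.Arrow) : QMap (restrictQ R S) R :=
  ⟨fun a => Walk.single (.fwd a.1)⟩

/-- A deletion of `2`-cycles lying in a homotopy `H` on a quiver `R`, away from the
vertex `k`: a collection of pairwise disjoint pairs of opposite arrows `(γ, δ)` between two
distinct vertices `i ≠ j`, both different from `k`, such that each composite `2`-cycle `γδ`
lies in `H`. -/
structure TwoCycleDeletion (R : Quiv V) (H : HSet R) (k : V) where
  pairs : Set (R.Arrow × R.Arrow)
  endpoints : ∀ q ∈ pairs, R.tgt q.1 = R.src q.2 ∧ R.tgt q.2 = R.src q.1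
  src_ne_k : ∀ q ∈ pairs, R.src q.1 ≠ k
  tgt_ne_k : ∀ q ∈ pairs, R.tgt q.1 ≠ k
  src_ne_tgt : ∀ q ∈ pairs, R.src q.1 ≠ R.tgt q.1
  mem_H : ∀ q ∈ pairs, ∀ (h : R.tgt q.1 = R.src q.2) (h' : R.tgt q.2 = R.src q.1),
    twoCycle q.1 q.2 h h' ∈ H (R.src q.1)
  disjoint : ∀ q ∈ pairs, ∀ q' ∈ pairs, q ≠ q' →
    q.1 ≠ q'.1 ∧ q.1 ≠ q'.2 ∧ q.2 ≠ q'.1 ∧ q.2 ≠ q'.2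

namespace TwoCycleDeletion

variable {R : Quiv V} {H : HSet R} {k : V}

/-- The set of deleted arrows. -/
def deleted (D : TwoCycleDeletion R H k) : Set R.Arrow :=
  {a | ∃ q ∈ D.pairs, a = q.1 ∨ a = q.2}

/-- A deletion is maximal if no `2`-cycle lying in `H` (between two distinct vertices, both
different from `k`) survives it.  This is the result of the iterative deletion procedure. -/
def Maximal (D : TwoCycleDeletion R H k) : Prop :=
  ∀ γ δ : R.Arrow, γ ∉ D.deleted → δ ∉ D.deleted →
    R.src γ ≠ k → R.tgt γ ≠ k → R.src γ ≠ R.tgt γ →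
    ∀ (h : R.tgt γ = R.src δ) (h' : R.tgt δ = R.src γ),
      twoCycle γ δ h h' ∉ H (R.src γ)

end TwoCycleDeletion

/-- The quiver `Q†` of the mutation `μ_k(Q,H) = (Q†,H†)` determined by a choice `D` of
deleted `2`-cycles. -/
def mutQuiv (Q : Quiv V) (H : HSet Q) (k : V)
    (D : TwoCycleDeletion (preMut Q k) (preH Q H k) k) : Quiv V :=
  restrictQ (preMut Q k) D.deleted

/-- The homotopy `H† = ker (ψ : π(Q†) → π(Q')/H')` of the mutation `μ_k(Q,H) = (Q†,H†)`,
where `ψ` is induced by the inclusion `Q† ⊆ Q'`. -/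
def mutH (Q : Quiv V) (H : HSet Q) (k : V)
    (D : TwoCycleDeletion (preMut Q k) (preH Q H k) k) : HSet (mutQuiv Q H k D) :=
  kerH (inclQMap (preMut Q k) D.deleted) (preH Q H k)

/-- `(R, K)` is (isomorphic, by a vertex-fixing isomorphism matching the homotopies, to)
the mutation `μ_k(Q, H)` of the quiver with homotopy `(Q, H)` in direction `k`. -/
def IsMutationStep (Q : Quiv V) (H : HSet Q) (k : V) (R : Quiv V) (K : HSet R) : Prop :=
  ∃ D : TwoCycleDeletion (preMut Q k) (preH Q H k) k, D.Maximal ∧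
    ∃ f : QIso (mutQuiv Q H k D) R,
      ∀ (v : V) (w : Walk (mutQuiv Q H k D) v v),
        w ∈ mutH Q H k D v ↔ f.toQMap.mapWalk w ∈ K v

/-- A `QMap` `F : π(Q) → π(R)` induces an isomorphism of quotient groupoids
`π(Q)/H_Q ≅ π(R)/H_R` (it is the identity on objects, well defined, full and faithful
on all morphism sets). -/
structure InducesQuotIso {Q R : Quiv V} (F : QMap Q R) (HQ : HSet Q) (HR : HSet R) : Prop where
  maps : ∀ {x y : V} (w u : Walk Q x y), HEquiv HQ w u → HEquiv HR (F.mapWalk w) (F.mapWalk u)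
  full : ∀ {x y : V} (w : Walk R x y), ∃ u : Walk Q x y, HEquiv HR (F.mapWalk u) w
  faithful : ∀ {x y : V} (w u : Walk Q x y),
    HEquiv HR (F.mapWalk w) (F.mapWalk u) → HEquiv HQ w u

/-- A deletion datum for the Fomin–Zelevinsky mutation: a collection of pairwise disjoint
pairs of opposite arrows (oriented `2`-cycles). -/
structure FZDeletion (R : Quiv V) where
  pairs : Set (R.Arrow × R.Arrow)
  endpoints : ∀ q ∈ pairs, R.tgt q.1 = R.src q.2 ∧ R.tgt q.2 = R.src q.1
  disjoint : ∀ q ∈ pairs, ∀ q' ∈ pairs, q ≠ q' →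
    q.1 ≠ q'.1 ∧ q.1 ≠ q'.2 ∧ q.2 ≠ q'.1 ∧ q.2 ≠ q'.2

/-- The arrows deleted by an `FZDeletion`. -/
def FZDeletion.deleted {R : Quiv V} (D : FZDeletion R) : Set R.Arrow :=
  {a | ∃ q ∈ D.pairs, a = q.1 ∨ a = q.2}

/-- `R` is (a representative of) the Fomin–Zelevinsky mutation `μ^FZ_k(Q)` of the `2`-acyclic
quiver `Q`: it is obtained from the pre-mutation of `Q` at `k` by deleting a maximal collection
of oriented `2`-cycles (so that the result is `2`-acyclic), up to vertex-fixing isomorphism. -/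
def IsFZMut (Q : Quiv V) (k : V) (R : Quiv V) : Prop :=
  ∃ D : FZDeletion (preMut Q k),
    (restrictQ (preMut Q k) D.deleted).TwoAcyclic ∧
    Nonempty (QIso (restrictQ (preMut Q k) D.deleted) R)

/-- Two homotopies `H, H'` on `Q` are equivalent if, for every mutation sequence, the
underlying quivers of the corresponding mutated quivers with homotopies are isomorphic by
vertex-fixing isomorphisms. -/
def HomotopyEquivalent (Q : Quiv V) (H H' : HSet Q) : Prop :=
  ∀ (ℓ : ℕ) (ks : ℕ → V)
    (Qs : ℕ → Quiv V) (Hs : ∀ i, HSet (Qs i))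
    (Qs' : ℕ → Quiv V) (Hs' : ∀ i, HSet (Qs' i)),
    Qs 0 = Q → HEq (Hs 0) H → Qs' 0 = Q → HEq (Hs' 0) H' →
    (∀ i < ℓ, IsMutationStep (Qs i) (Hs i) (ks i) (Qs (i + 1)) (Hs (i + 1))) →
    (∀ i < ℓ, IsMutationStep (Qs' i) (Hs' i) (ks i) (Qs' (i + 1)) (Hs' (i + 1))) →
    Nonempty (QIso (Qs ℓ) (Qs' ℓ))

/-- The relation on vertices generated by the arrows (connectivity). -/
def adjRel (Q : Quiv V) : V → V → Prop := fun x y =>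
  ∃ a : Q.Arrow, (Q.src a = x ∧ Q.tgt a = y) ∨ (Q.src a = y ∧ Q.tgt a = x)

/-- The number of connected components of the underlying graph. -/
noncomputable def componentCount (Q : Quiv V) : ℕ := Nat.card (Quot (adjRel Q))

/-- The rank of the fundamental group of (the underlying graph of) a finite quiver:
`|Q₁| - |Q₀| + (number of connected components)`. -/
noncomputable def fundGroupRank (Q : Quiv V) : ℤ :=
  (Nat.card Q.Arrow : ℤ) - (Nat.card V : ℤ) + (componentCount Q : ℤ)

end CMu

/-!
Classify the arrows of a quiver `R` with a functor `F : π(R) → π(Q)` by the morphism of `π(Q)/H`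
(endpoints included) over which they lie. The composite `π(Q♥) → π(Q†) → π(Q)` has kernel `H♥`
relative to `H`, so it suffices that `Q♥` and `Q` have equally many arrows over every morphism
`[w] : i → j`: a class-preserving bijection is then the required isomorphism `η`.

Arrows at `k` are reversed twice. For `i ≠ j` away from `k`, the arrows of `Q♥` over `[w]` are
those of `Q`, the composites `[αβ]` over `[w]`, and the composites `[β*α*]` for `[αβ]` over
`[w⁻¹]`, less the deleted arrows; the two arrows of a deleted `2`-cycle lie over `[w]` and
`[w⁻¹]`. So `#Q♥[w] - #Q[w]` is invariant under `w ↦ w⁻¹` (local finiteness makes these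
counts finite). Reducedness of `H` kills `#Q[w]` or `#Q[w⁻¹]`, maximality of the second deletion
kills `#Q♥[w]` or `#Q♥[w⁻¹]`, and together these force `#Q♥[w] = #Q[w]`.
-/

namespace CMu

variable {V : Type}

section Walks

variable {Q : Quiv V}

@[simp] theorem Step.inv_inv {x y : V} (e : Step Q x y) : e.inv.inv = e := by
  cases e <;> rfl

namespace Walk

@[simp] theorem comp_nil {x y : V} (w : Walk Q x y) : w.comp (.nil y) = w := by
  induction w with
  | nil => rfl
  | cons e u ih => simp [comp, ih]

theorem comp_assoc {x y z t : V} (w : Walk Q x y) (u : Walk Q y z) (v : Walk Q z t) :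
    (w.comp u).comp v = w.comp (u.comp v) := by
  induction w with
  | nil => rfl
  | cons e w ih => simp [comp, ih]

@[simp] theorem single_inv {x y : V} (e : Step Q x y) : (single e).inv = single e.inv := rfl

theorem inv_comp {x y z : V} (w : Walk Q x y) (u : Walk Q y z) :
    (w.comp u).inv = u.inv.comp w.inv := by
  induction w with
  | nil => simp [comp, inv]
  | cons e w ih => simp [comp, inv, ih, comp_assoc]

@[simp] theorem inv_inv {x y : V} (w : Walk Q x y) : w.inv.inv = w := by
  induction w with
  | nil => rfl
  | cons e w ih =>
    change ((w.inv).comp (single e.inv)).inv = cons e w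
    rw [inv_comp, ih, single_inv, Step.inv_inv]
    rfl

@[simp] theorem cast_rfl {x y : V} (w : Walk Q x y) : w.cast rfl rfl = w := rfl

theorem inv_comp_cast {x y y' z : V} (u : Walk Q x y) (v : Walk Q y' z) (h : y' = y) :
    (u.comp (v.cast h rfl)).inv = v.inv.comp (u.inv.cast h.symm rfl) := by
  subst h; exact inv_comp u v

end Walk

namespace WalkHtpy

theorem comp_left {x y z : V} (w : Walk Q x y) {u v : Walk Q y z} (h : WalkHtpy Q u v) :
    WalkHtpy Q (w.comp u) (w.comp v) := by
  induction w with
  | nil => exact h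
  | cons e w ih => exact .congr e (ih h)

theorem comp_inv_cancel_left {x y z : V} (t : Walk Q x y) (s : Walk Q x z) :
    WalkHtpy Q (t.comp (t.inv.comp s)) s := by
  induction t with
  | nil => exact .refl s
  | cons e t ih =>
    have h : (Walk.cons e t).comp ((Walk.cons e t).inv.comp s) =
        .cons e (t.comp (t.inv.comp (.cons e.inv s))) := by
      change Walk.cons e (t.comp ((t.inv.comp (.single e.inv)).comp s)) = _
      rw [Walk.comp_assoc]
      rfl
    rw [h]
    exact .trans (.congr e (ih _)) (.cancel e s)

theorem comp_inv_self {x y : V} (w : Walk Q x y) : WalkHtpy Q (w.comp w.inv) (.nil x) := by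
  simpa using comp_inv_cancel_left w (.nil x)

theorem inv_comp_self {x y : V} (w : Walk Q x y) : WalkHtpy Q (w.inv.comp w) (.nil y) := by
  simpa using comp_inv_cancel_left w.inv (.nil y)

end WalkHtpy

end Walks

namespace IsHomotopy

variable {Q : Quiv V} {H : HSet Q} (hH : IsHomotopy Q H)
include hH

theorem hequiv_of_htpy {x y : V} {w u : Walk Q x y} (h : WalkHtpy Q w u) : HEquiv H w u :=
  hH.htpy_mem (.trans (.symm (WalkHtpy.inv_comp_self w)) (.comp_left w.inv h)) (hH.nil_mem y)

theorem hequiv_refl {x y : V} (w : Walk Q x y) : HEquiv H w w :=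
  hH.hequiv_of_htpy (.refl w)

theorem hequiv_symm {x y : V} {w u : Walk Q x y} (h : HEquiv H w u) : HEquiv H u w := by
  simpa [HEquiv, Walk.inv_comp] using hH.inv_mem h

theorem hequiv_trans {x y : V} {w u t : Walk Q x y} (h₁ : HEquiv H w u) (h₂ : HEquiv H u t) :
    HEquiv H w t := by
  refine hH.htpy_mem ?_ (hH.comp_mem h₁ h₂)
  rw [Walk.comp_assoc]
  exact .comp_left w.inv (.comp_inv_cancel_left u t)

theorem hequiv_equivalence {x y : V} : Equivalence (HEquiv H (x := x) (y := y)) :=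
  ⟨hH.hequiv_refl, hH.hequiv_symm, hH.hequiv_trans⟩

theorem mem_of_hequiv {v : V} {w u : Walk Q v v} (h : HEquiv H w u) (hw : w ∈ H v) :
    u ∈ H v :=
  hH.htpy_mem (.comp_inv_cancel_left w u) (hH.comp_mem hw h)

/-- Conjugate `w₁⁻¹ u₁ ∈ H` by `w₂`, then multiply by `w₂⁻¹ u₂ ∈ H`. -/
theorem hequiv_comp {x y z : V} {w₁ u₁ : Walk Q x y} {w₂ u₂ : Walk Q y z}
    (h₁ : HEquiv H w₁ u₁) (h₂ : HEquiv H w₂ u₂) : HEquiv H (w₁.comp w₂) (u₁.comp u₂) := by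
  refine hH.htpy_mem ?_ (hH.comp_mem (hH.conj_mem w₂ h₁) h₂)
  simp only [Walk.inv_comp, Walk.comp_assoc]
  exact .comp_left _ (.comp_left _ (.comp_left _ (.comp_inv_cancel_left w₂ u₂)))

theorem hequiv_inv {x y : V} {w u : Walk Q x y} (h : HEquiv H w u) :
    HEquiv H w.inv u.inv := by
  refine hH.htpy_mem (.comp_left _ ?_) (hH.conj_mem w.inv (hH.hequiv_symm h))
  rw [Walk.comp_assoc]
  simpa using WalkHtpy.comp_left u.inv (.comp_inv_self w)

theorem hequiv_inv_iff {x y : V} {w u : Walk Q x y} :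
    HEquiv H w.inv u.inv ↔ HEquiv H w u :=
  ⟨fun h => by simpa using hH.hequiv_inv h, hH.hequiv_inv⟩

theorem comp_mem_iff_hequiv_inv {x y : V} {u : Walk Q x y} {v : Walk Q y x} :
    u.comp v ∈ H x ↔ HEquiv H v u.inv := by
  rw [HEquiv, ← Walk.inv_comp]
  exact ⟨hH.inv_mem, fun h => by simpa using hH.inv_mem h⟩

end IsHomotopy

namespace QMap

variable {Q R S : Quiv V}

theorem mapStep_inv (F : QMap Q R) {x y : V} (e : Step Q x y) :
    F.mapStep e.inv = (F.mapStep e).inv := by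
  cases e <;> simp [mapStep, Step.inv]

theorem mapWalk_comp (F : QMap Q R) {x y z : V} (w : Walk Q x y) (u : Walk Q y z) :
    F.mapWalk (w.comp u) = (F.mapWalk w).comp (F.mapWalk u) := by
  induction w with
  | nil => rfl
  | cons e w ih => simp [Walk.comp, mapWalk, ih, Walk.comp_assoc]

@[simp] theorem mapWalk_single (F : QMap Q R) {x y : V} (e : Step Q x y) :
    F.mapWalk (.single e) = F.mapStep e :=
  Walk.comp_nil _

theorem mapWalk_inv (F : QMap Q R) {x y : V} (w : Walk Q x y) :
    F.mapWalk w.inv = (F.mapWalk w).inv := by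
  induction w with
  | nil => rfl
  | cons e w ih =>
    change F.mapWalk (w.inv.comp (.single e.inv)) = _
    rw [mapWalk_comp, ih, mapWalk_single, mapStep_inv, mapWalk, Walk.inv_comp]

theorem mapWalk_cast (F : QMap Q R) {x y x' y' : V} (hx : x = x') (hy : y = y')
    (w : Walk Q x y) : F.mapWalk (w.cast hx hy) = (F.mapWalk w).cast hx hy := by
  subst hx hy; rfl

theorem comp_mapWalk (F : QMap Q R) (G : QMap R S) {x y : V} (w : Walk Q x y) :
    (F.comp G).mapWalk w = G.mapWalk (F.mapWalk w) := by
  induction w with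
  | nil => rfl
  | cons e w ih =>
    rw [mapWalk, mapWalk, G.mapWalk_comp, ih]
    cases e with
    | fwd a => rfl
    | bwd a => exact congrArg (Walk.comp · _) (G.mapWalk_inv (F.toWalk a)).symm

end QMap

def idQMap (Q : Quiv V) : QMap Q Q := ⟨fun a => .single (.fwd a)⟩

@[simp] theorem idQMap_mapWalk {Q : Quiv V} {x y : V} (w : Walk Q x y) :
    (idQMap Q).mapWalk w = w := by
  induction w with
  | nil => rfl
  | cons e w ih =>
    change ((idQMap Q).mapStep e).comp ((idQMap Q).mapWalk w) = _
    rw [ih]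
    cases e <;> rfl

@[simp] theorem QMap.comp_id {Q R : Quiv V} (F : QMap Q R) : F.comp (idQMap R) = F := by
  cases F
  simp [QMap.comp]

theorem kerH_comp {Q R S : Quiv V} (F : QMap Q R) (G : QMap R S) (K : HSet S) :
    kerH F (kerH G K) = kerH (F.comp G) K := by
  funext v
  ext w
  exact Iff.of_eq (congrArg (· ∈ K v) (F.comp_mapWalk G w).symm)

theorem IsHomotopy.hequiv_mapWalk {Q R : Quiv V} {H : HSet R} (hH : IsHomotopy R H)
    {F G : QMap Q R} (hFG : ∀ a, HEquiv H (F.toWalk a) (G.toWalk a)) {x y : V}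
    (w : Walk Q x y) : HEquiv H (F.mapWalk w) (G.mapWalk w) := by
  induction w with
  | nil => exact hH.hequiv_refl _
  | cons e u ih =>
    refine hH.hequiv_comp ?_ ih
    cases e with
    | fwd a => exact hFG a
    | bwd a => exact hH.hequiv_inv (hFG a)

theorem nonempty_equiv_of_encard_eq {α β : Type*} {s : Set α} {t : Set β} (ht : t.Finite)
    (h : s.encard = t.encard) : Nonempty (s ≃ t) := by
  have hs : s.Finite := Set.encard_ne_top_iff.mp (h ▸ Set.encard_ne_top_iff.mpr ht)
  have := hs.to_subtype
  have := ht.to_subtype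
  rw [← Finite.card_eq, Nat.card_coe_set_eq, Nat.card_coe_set_eq, ← Nat.cast_inj (R := ℕ∞),
    hs.cast_ncard_eq, ht.cast_ncard_eq, h]

theorem encard_eq_preimage_inl_add_preimage_inr {α β : Type*} (s : Set (α ⊕ β)) :
    s.encard = (Sum.inl ⁻¹' s).encard + (Sum.inr ⁻¹' s).encard := by
  conv_lhs => rw [← Set.image_preimage_inl_union_image_preimage_inr s]
  rw [Set.encard_union_eq Set.disjoint_image_inl_image_inr, Sum.inl_injective.encard_image,
    Sum.inr_injective.encard_image]

section Classes

variable {Q R R' : Quiv V} {H : HSet Q}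

theorem hequiv_cast_iff {x y x' y' : V} (hx : x = x') (hy : y = y') (u : Walk Q x y)
    (v : Walk Q x' y') : HEquiv H (u.cast hx hy) v ↔ HEquiv H u (v.cast hx.symm hy.symm) := by
  subst hx hy; rfl

theorem QMap.mapWalk_twoCycle (F : QMap R Q) (γ δ : R.Arrow) (h : R.tgt γ = R.src δ)
    (h' : R.tgt δ = R.src γ) :
    F.mapWalk (twoCycle γ δ h h') = (F.toWalk γ).comp ((F.toWalk δ).cast h.symm h') := by
  change (F.toWalk γ).comp (F.mapWalk ((Walk.single (.fwd δ)).cast h.symm h')) = _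
  rw [QMap.mapWalk_cast, QMap.mapWalk_single]
  rfl

theorem IsHomotopy.twoCycle_mem_kerH_iff (hH : IsHomotopy Q H) (F : QMap R Q) (γ δ : R.Arrow)
    (h : R.tgt γ = R.src δ) (h' : R.tgt δ = R.src γ) :
    twoCycle γ δ h h' ∈ kerH F H (R.src γ) ↔
      HEquiv H (F.toWalk δ) ((F.toWalk γ).inv.cast h h'.symm) := by
  rw [kerH, Set.mem_ofPred_eq, F.mapWalk_twoCycle, hH.comp_mem_iff_hequiv_inv, hequiv_cast_iff]

/-- The arrows of `R` lying over the morphism `[w]` of `π(Q)/H`. -/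
def QMap.arrowsOver (F : QMap R Q) (H : HSet Q) {i j : V} (w : Walk Q i j) : Set R.Arrow :=
  {x | ∃ (hs : R.src x = i) (ht : R.tgt x = j), HEquiv H ((F.toWalk x).cast hs ht) w}

theorem QMap.arrowsOver_eq_empty_of_loopFree (hR : R.LoopFree) (F : QMap R Q) {i : V}
    (w : Walk Q i i) : F.arrowsOver H w = ∅ :=
  Set.eq_empty_of_forall_notMem fun x ⟨hs, ht, _⟩ => hR x (hs.trans ht.symm)

theorem QMap.finite_arrowsOver (F : QMap R Q) {i j : V} (w : Walk Q i j)
    (hfin : {x : R.Arrow | R.src x = i}.Finite) : (F.arrowsOver H w).Finite :=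
  hfin.subset fun _ hx => hx.1

theorem QMap.mem_arrowsOver_of_toWalk_eq {F : QMap R Q} {G : QMap R' Q} {x : R.Arrow}
    {y : R'.Arrow} (hs : R.src x = R'.src y) (ht : R.tgt x = R'.tgt y)
    (h : F.toWalk x = (G.toWalk y).cast hs.symm ht.symm) {i j : V} (w : Walk Q i j) :
    x ∈ F.arrowsOver H w ↔ y ∈ G.arrowsOver H w := by
  simp only [QMap.arrowsOver, Set.mem_ofPred_eq]
  generalize F.toWalk x = u at h
  generalize G.toWalk y = v at h
  generalize R.src x = a at hs u
  generalize R.tgt x = b at ht u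
  subst hs ht h
  rfl

/-- The morphisms of `π(Q)/H`, each together with its endpoints. -/
def HClass (Q : Quiv V) (H : HSet Q) : Type :=
  Σ p : V × V, Quot (HEquiv H (x := p.1) (y := p.2))

def QMap.hclass (F : QMap R Q) (H : HSet Q) (x : R.Arrow) : HClass Q H :=
  ⟨(R.src x, R.tgt x), Quot.mk _ (F.toWalk x)⟩

namespace IsHomotopy

variable (hH : IsHomotopy Q H)
include hH

theorem mem_arrowsOver_congr_inv {F : QMap R Q} {G : QMap R' Q} {x : R.Arrow} {y : R'.Arrow}
    (hs : R.src x = R'.tgt y) (ht : R.tgt x = R'.src y)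
    (h : HEquiv H (F.toWalk x) ((G.toWalk y).inv.cast hs.symm ht.symm)) {i j : V}
    (w : Walk Q i j) : x ∈ F.arrowsOver H w ↔ y ∈ G.arrowsOver H w.inv := by
  simp only [QMap.arrowsOver, Set.mem_ofPred_eq]
  generalize F.toWalk x = u at h
  generalize G.toWalk y = v at h
  generalize R.src x = a at hs u
  generalize R.tgt x = b at ht u
  subst hs ht
  refine ⟨fun ⟨hi, hj, e⟩ => ⟨hj, hi, ?_⟩, fun ⟨hj, hi, e⟩ => ⟨hi, hj, ?_⟩⟩ <;> subst hi hj
  · rw [← hH.hequiv_inv_iff, Walk.inv_inv]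
    exact hH.hequiv_trans (hH.hequiv_symm h) e
  · rw [← hH.hequiv_inv_iff] at e
    exact hH.hequiv_trans h (by simpa using e)

theorem mem_arrowsOver_iff_of_twoCycle_mem {F : QMap R Q} {γ δ : R.Arrow}
    {h : R.tgt γ = R.src δ} {h' : R.tgt δ = R.src γ}
    (hcyc : twoCycle γ δ h h' ∈ kerH F H (R.src γ)) {i j : V} (w : Walk Q i j) :
    γ ∈ F.arrowsOver H w ↔ δ ∈ F.arrowsOver H w.inv := by
  rw [hH.mem_arrowsOver_congr_inv h.symm h' ((hH.twoCycle_mem_kerH_iff F γ δ h h').mp hcyc) w.inv,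
    Walk.inv_inv]

theorem twoCycle_mem_kerH_of_mem_arrowsOver {F : QMap R Q} {γ δ : R.Arrow} {i j : V}
    {w : Walk Q i j} (hγ : γ ∈ F.arrowsOver H w) (hδ : δ ∈ F.arrowsOver H w.inv) :
    ∃ (h : R.tgt γ = R.src δ) (h' : R.tgt δ = R.src γ),
      twoCycle γ δ h h' ∈ kerH F H (R.src γ) := by
  obtain ⟨hs, ht, e⟩ := hγ
  obtain ⟨hs', ht', e'⟩ := hδ
  refine ⟨ht.trans hs'.symm, ht'.trans hs.symm, ?_⟩
  subst hs ht
  rw [hH.twoCycle_mem_kerH_iff, ← hequiv_cast_iff hs' ht']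
  exact hH.hequiv_trans e' (hH.hequiv_inv (hH.hequiv_symm e))

theorem hclass_eq_mk_iff (F : QMap R Q) (x : R.Arrow) {i j : V} (w : Walk Q i j) :
    F.hclass H x = ⟨(i, j), Quot.mk _ w⟩ ↔ x ∈ F.arrowsOver H w := by
  constructor
  · intro h
    obtain ⟨hs, ht⟩ := Prod.mk.inj (congrArg Sigma.fst h)
    subst hs ht
    exact ⟨rfl, rfl, (hH.hequiv_equivalence.eqvGen_iff).mp
      (Quot.eqvGen_exact (eq_of_heq (Sigma.mk.inj h).2))⟩
  · rintro ⟨rfl, rfl, hw⟩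
    exact congrArg (Sigma.mk _) (Quot.sound hw)

theorem exists_qIso_hequiv (F : QMap R Q)
    (hfin : ∀ {i j : V} (w : Walk Q i j), ((idQMap Q).arrowsOver H w).Finite)
    (hcount : ∀ {i j : V} (w : Walk Q i j),
      (F.arrowsOver H w).encard = ((idQMap Q).arrowsOver H w).encard) :
    ∃ η : QIso R Q, ∀ x, HEquiv H (F.toWalk x) (η.toQMap.toWalk x) := by
  have fiber (c : HClass Q H) :
      Nonempty ({x // F.hclass H x = c} ≃ {a // (idQMap Q).hclass H a = c}) := by
    obtain ⟨⟨i, j⟩, c⟩ := c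
    induction c using Quot.ind with
    | mk w =>
      obtain ⟨e⟩ := nonempty_equiv_of_encard_eq (hfin w) (hcount w)
      exact ⟨(Equiv.subtypeEquivRight fun x => hclass_eq_mk_iff hH F x w).trans
        (e.trans (Equiv.subtypeEquivRight fun a => hclass_eq_mk_iff hH _ a w).symm)⟩
  let e := Equiv.ofFiberEquiv fun c => (fiber c).some
  have he (x : R.Arrow) : e x ∈ (idQMap Q).arrowsOver H (F.toWalk x) :=
    (hclass_eq_mk_iff hH _ _ _).mp (Equiv.ofFiberEquiv_map _ x)
  exact ⟨⟨e, fun x => (he x).1, fun x => (he x).2.1⟩, fun x => hH.hequiv_symm (he x).2.2⟩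

theorem exists_qIso_kerH_eq (F : QMap R Q)
    (hfin : ∀ {i j : V} (w : Walk Q i j), ((idQMap Q).arrowsOver H w).Finite)
    (hcount : ∀ {i j : V} (w : Walk Q i j),
      (F.arrowsOver H w).encard = ((idQMap Q).arrowsOver H w).encard) :
    ∃ η : QIso R Q, ∀ (v : V) (w : Walk R v v), w ∈ kerH F H v ↔ η.toQMap.mapWalk w ∈ H v := by
  obtain ⟨η, hη⟩ := exists_qIso_hequiv hH F hfin hcount
  refine ⟨η, fun v w => ⟨hH.mem_of_hequiv (hH.hequiv_mapWalk hη w), ?_⟩⟩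
  exact hH.mem_of_hequiv (hH.hequiv_symm (hH.hequiv_mapWalk hη w))

end IsHomotopy

end Classes

section Mutation

variable {Q R : Quiv V} {H : HSet Q} {k : V}

theorem preMut_loopFree (hR : R.LoopFree) : (preMut R k).LoopFree := by
  rintro (a | a | p) h
  · exact hR a.1 h
  · exact hR a.1 h.symm
  · exact p.2.2.2 h

theorem mutQuiv_loopFree {K : HSet R} (hR : R.LoopFree)
    (D : TwoCycleDeletion (preMut R k) (preH R K k) k) : (mutQuiv R K k D).LoopFree :=
  fun a => preMut_loopFree hR a.1

/-- Indexes the composite arrows `[αβ]` of `μ̃_k R`. -/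
abbrev PathThrough (R : Quiv V) (k : V) : Type :=
  {p : R.Arrow × R.Arrow // R.src p.1 = k ∧ R.tgt p.2 = k ∧ R.src p.2 ≠ R.tgt p.1}

theorem TwoCycleDeletion.src_ne_and_tgt_ne_of_mem_deleted {K : HSet R}
    (D : TwoCycleDeletion R K k) {x : R.Arrow} (hx : x ∈ D.deleted) :
    R.src x ≠ k ∧ R.tgt x ≠ k := by
  obtain ⟨q, hq, rfl | rfl⟩ := hx
  · exact ⟨D.src_ne_k q hq, D.tgt_ne_k q hq⟩
  · rw [← (D.endpoints q hq).1, (D.endpoints q hq).2]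
    exact ⟨D.tgt_ne_k q hq, D.src_ne_k q hq⟩

/-- The functor `π(Q†) → π(Q') → π(Q)` of a mutation `μ_k(Q,H) = (Q†,H†)`. -/
def mutMap (R : Quiv V) (K : HSet R) (k : V) (D : TwoCycleDeletion (preMut R k) (preH R K k) k) :
    QMap (mutQuiv R K k D) R :=
  (inclQMap (preMut R k) D.deleted).comp (phiQMap R k)

theorem mutH_eq_kerH (D : TwoCycleDeletion (preMut Q k) (preH Q H k) k) :
    mutH Q H k D = kerH (mutMap Q H k D) H :=
  kerH_comp _ _ _

section ToWalk

variable (G : QMap R Q)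

theorem phiQMap_comp_toWalk_inl (a : {a : R.Arrow // R.src a ≠ k ∧ R.tgt a ≠ k}) :
    ((phiQMap R k).comp G).toWalk (.inl a) = G.toWalk a.1 :=
  G.mapWalk_single _

theorem phiQMap_comp_toWalk_reversed (a : {a : R.Arrow // R.src a = k ∨ R.tgt a = k}) :
    ((phiQMap R k).comp G).toWalk (.inr (.inl a)) = (G.toWalk a.1).inv :=
  G.mapWalk_single _

theorem phiQMap_comp_toWalk_composite (p : PathThrough R k) :
    ((phiQMap R k).comp G).toWalk (.inr (.inr p)) =
      (G.toWalk p.1.2).comp ((G.toWalk p.1.1).cast (p.2.1.trans p.2.2.1.symm) rfl) := by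
  change (G.toWalk p.1.2).comp (G.mapWalk ((Walk.single (.fwd p.1.1)).cast _ rfl)) = _
  rw [QMap.mapWalk_cast, QMap.mapWalk_single]
  rfl

theorem mutMap_comp_toWalk {K : HSet R} (D : TwoCycleDeletion (preMut R k) (preH R K k) k)
    (x : (mutQuiv R K k D).Arrow) :
    ((mutMap R K k D).comp G).toWalk x = ((phiQMap R k).comp G).toWalk x.1 := by
  change G.mapWalk ((phiQMap R k).mapWalk (.single (.fwd x.1))) = _
  rw [QMap.mapWalk_single]
  rfl

end ToWalk

def QMap.compositesOver (G : QMap R Q) (k : V) (H : HSet Q) {i j : V} (w : Walk Q i j) :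
    Set (PathThrough R k) :=
  {p | .inr (.inr p) ∈ ((phiQMap R k).comp G).arrowsOver H w}

theorem QMap.finite_compositesOver (G : QMap R Q) {i j : V} (w : Walk Q i j)
    (hk : {x : R.Arrow | R.src x = k}.Finite) (hi : {x : R.Arrow | R.src x = i}.Finite) :
    (G.compositesOver k H w).Finite := by
  refine ((hk.prod hi).preimage Subtype.val_injective.injOn).subset fun p hp => ?_
  exact ⟨p.2.1, hp.1⟩

theorem encard_arrowsOver_restrictQ {S : Set R.Arrow} (F : QMap (restrictQ R S) Q)
    (G : QMap R Q) (hFG : ∀ x, F.toWalk x = G.toWalk x.1) {i j : V} (w : Walk Q i j) :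
    (F.arrowsOver H w).encard = (G.arrowsOver H w \ S).encard := by
  have hmem (x : (restrictQ R S).Arrow) : x ∈ F.arrowsOver H w ↔ x.1 ∈ G.arrowsOver H w :=
    QMap.mem_arrowsOver_of_toWalk_eq (x := x) (y := x.1) rfl rfl (hFG x) w
  have h : Subtype.val '' F.arrowsOver H w = G.arrowsOver H w \ S := by
    ext x
    constructor
    · rintro ⟨y, hy, rfl⟩
      exact ⟨(hmem y).mp hy, y.2⟩
    · rintro ⟨hx, hxS⟩
      exact ⟨⟨x, hxS⟩, (hmem ⟨x, hxS⟩).mpr hx, rfl⟩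
  exact (Subtype.val_injective.encard_image _).symm.trans (congrArg Set.encard h)

theorem mem_arrowsOver_phiQMap_comp_inl (G : QMap R Q)
    (a : {a : R.Arrow // R.src a ≠ k ∧ R.tgt a ≠ k}) {i j : V} (w : Walk Q i j) :
    .inl a ∈ ((phiQMap R k).comp G).arrowsOver H w ↔ a.1 ∈ G.arrowsOver H w :=
  QMap.mem_arrowsOver_of_toWalk_eq (R := preMut R k) (x := .inl a) (y := a.1) rfl rfl
    (phiQMap_comp_toWalk_inl G a) w

theorem encard_arrowsOver_phiQMap_comp (G : QMap R Q) {i j : V} (hi : i ≠ k) (hj : j ≠ k)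
    (w : Walk Q i j) :
    (((phiQMap R k).comp G).arrowsOver H w).encard =
      (G.arrowsOver H w).encard + (G.compositesOver k H w).encard := by
  set A : Set ({a : R.Arrow // R.src a ≠ k ∧ R.tgt a ≠ k} ⊕
      ({a : R.Arrow // R.src a = k ∨ R.tgt a = k} ⊕ PathThrough R k)) :=
    ((phiQMap R k).comp G).arrowsOver H w with hA
  have hkept : Sum.inl ⁻¹' A = Subtype.val ⁻¹' G.arrowsOver H w := by
    ext a
    exact mem_arrowsOver_phiQMap_comp_inl G a w
  have hrev : Sum.inl ⁻¹' (Sum.inr ⁻¹' A) = ∅ := by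
    refine Set.eq_empty_of_forall_notMem fun a ha => ?_
    obtain ⟨hs, ht, -⟩ := ha
    exact a.2.elim (fun h => hj (ht.symm.trans h)) fun h => hi (hs.symm.trans h)
  have hrange : G.arrowsOver H w ⊆ Set.range (Subtype.val :
      {a : R.Arrow // R.src a ≠ k ∧ R.tgt a ≠ k} → R.Arrow) := fun x ⟨hs, ht, _⟩ =>
    ⟨⟨x, hs ▸ hi, ht ▸ hj⟩, rfl⟩
  change A.encard = _
  rw [encard_eq_preimage_inl_add_preimage_inr A, encard_eq_preimage_inl_add_preimage_inr
    (Sum.inr ⁻¹' A), hkept, hrev, Set.encard_empty, zero_add,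
    Set.encard_preimage_of_injective_subset_range Subtype.val_injective hrange]
  rfl

variable {K : HSet R} (D : TwoCycleDeletion (preMut R k) (preH R K k) k)

theorem mem_arrowsOver_mutMap_comp (G : QMap R Q) (x : (mutQuiv R K k D).Arrow) {i j : V}
    (w : Walk Q i j) :
    x ∈ ((mutMap R K k D).comp G).arrowsOver H w ↔ x.1 ∈ ((phiQMap R k).comp G).arrowsOver H w :=
  QMap.mem_arrowsOver_of_toWalk_eq (x := x) (y := x.1) rfl rfl (mutMap_comp_toWalk G D x) w

theorem encard_arrowsOver_mutMap_comp_add (G : QMap R Q) {i j : V} (hi : i ≠ k) (hj : j ≠ k)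
    (w : Walk Q i j) :
    (((mutMap R K k D).comp G).arrowsOver H w).encard +
        (((phiQMap R k).comp G).arrowsOver H w ∩ D.deleted).encard =
      (G.arrowsOver H w).encard + (G.compositesOver k H w).encard := by
  rw [show (((mutMap R K k D).comp G).arrowsOver H w).encard =
      (((phiQMap R k).comp G).arrowsOver H w \ D.deleted).encard from
    encard_arrowsOver_restrictQ _ _ (mutMap_comp_toWalk G D) w,
    Set.encard_sdiff_add_encard_inter, encard_arrowsOver_phiQMap_comp G hi hj]

theorem TwoCycleDeletion.Maximal.encard_arrowsOver_mutMap_comp_eq_zero_or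
    {D : TwoCycleDeletion (preMut R k) (preH R K k) k} (hD : D.Maximal) (hH : IsHomotopy Q H)
    (G : QMap R Q) (hK : ∀ v, kerH ((phiQMap R k).comp G) H v ⊆ preH R K k v) {i j : V}
    (hij : i ≠ j) (hi : i ≠ k) (hj : j ≠ k) (w : Walk Q i j) :
    (((mutMap R K k D).comp G).arrowsOver H w).encard = 0 ∨
      (((mutMap R K k D).comp G).arrowsOver H w.inv).encard = 0 := by
  simp only [Set.encard_eq_zero, ← Set.not_nonempty_iff_eq_empty, ← not_and_or]
  rintro ⟨⟨γ, hγ⟩, ⟨δ, hδ⟩⟩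
  rw [mem_arrowsOver_mutMap_comp] at hγ hδ
  obtain ⟨h, h', hcyc⟩ := hH.twoCycle_mem_kerH_of_mem_arrowsOver hγ hδ
  obtain ⟨hs, ht, -⟩ := hγ
  exact hD γ.1 δ.1 γ.2 δ.2 (hs ▸ hi) (ht ▸ hj) (hs ▸ ht ▸ hij) h h' (hK _ hcyc)

/-- The reversed arrow `a*` of an arrow `a` incident to `k`; it is never deleted. -/
def TwoCycleDeletion.revArrow (a : {a : R.Arrow // R.src a = k ∨ R.tgt a = k}) :
    (mutQuiv R K k D).Arrow :=
  ⟨.inr (.inl a), fun h => by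
    have := D.src_ne_and_tgt_ne_of_mem_deleted h
    exact a.2.elim this.2 this.1⟩

theorem TwoCycleDeletion.revArrow_injective : Function.Injective D.revArrow :=
  fun _ _ h => Sum.inl_injective (Sum.inr_injective (congrArg Subtype.val h))

theorem TwoCycleDeletion.exists_revArrow_eq (hR : R.LoopFree) (x : (mutQuiv R K k D).Arrow)
    (hx : (preMut R k).src x.1 = k ∨ (preMut R k).tgt x.1 = k) : ∃ a, D.revArrow a = x := by
  obtain ⟨a | a | p, hxD⟩ := x
  · exact hx.elim (absurd · a.2.1) (absurd · a.2.2)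
  · exact ⟨a, rfl⟩
  · exact (hx.elim (fun h => hR _ (h.trans p.2.2.1.symm)) fun h => hR _ (p.2.1.trans h.symm)).elim

theorem mutMap_comp_toWalk_revArrow (G : QMap R Q)
    (a : {a : R.Arrow // R.src a = k ∨ R.tgt a = k}) :
    ((mutMap R K k D).comp G).toWalk (D.revArrow a) = (G.toWalk a.1).inv :=
  (mutMap_comp_toWalk G D _).trans (phiQMap_comp_toWalk_reversed G a)

theorem encard_arrowsOver_mutMap_comp_of_incident (hR : R.LoopFree) (hH : IsHomotopy Q H)
    (G : QMap R Q) {i j : V} (hij : i = k ∨ j = k) (w : Walk Q i j) :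
    (((mutMap R K k D).comp G).arrowsOver H w).encard = (G.arrowsOver H w.inv).encard := by
  set A := ((mutMap R K k D).comp G).arrowsOver H w
  have hpre : D.revArrow ⁻¹' A = Subtype.val ⁻¹' G.arrowsOver H w.inv := by
    ext a
    exact hH.mem_arrowsOver_congr_inv rfl rfl
      (mutMap_comp_toWalk_revArrow D G a ▸ hH.hequiv_refl _) w
  have hA : A ⊆ Set.range D.revArrow := fun x ⟨hs, ht, _⟩ =>
    D.exists_revArrow_eq hR x (hij.imp hs.trans ht.trans)
  have hrange : G.arrowsOver H w.inv ⊆ Set.range (Subtype.val :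
      {a : R.Arrow // R.src a = k ∨ R.tgt a = k} → R.Arrow) := fun x ⟨hs, ht, _⟩ =>
    ⟨⟨x, hij.symm.imp hs.trans ht.trans⟩, rfl⟩
  rw [← Set.encard_preimage_of_injective_subset_range D.revArrow_injective hA, hpre,
    Set.encard_preimage_of_injective_subset_range Subtype.val_injective hrange]

/-- The composite arrow `[β* α*]` of `μ̃_k (μ_k R)` corresponding to the composite `[αβ]` of
`μ̃_k R`. -/
def TwoCycleDeletion.revPath (p : PathThrough R k) : PathThrough (mutQuiv R K k D) k :=
  ⟨(D.revArrow ⟨p.1.2, .inr p.2.2.1⟩, D.revArrow ⟨p.1.1, .inl p.2.1⟩), p.2.2.1, p.2.1,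
    fun h => p.2.2.2 h.symm⟩

theorem TwoCycleDeletion.revPath_bijective (hR : R.LoopFree) : Function.Bijective D.revPath := by
  constructor
  · intro p q h
    have h₁ := D.revArrow_injective (congrArg (·.1.1) h)
    have h₂ := D.revArrow_injective (congrArg (·.1.2) h)
    exact Subtype.ext (Prod.ext (congrArg Subtype.val h₂) (congrArg Subtype.val h₁))
  · rintro ⟨⟨x, y⟩, hx, hy, hne⟩
    obtain ⟨b, rfl⟩ := D.exists_revArrow_eq hR x (.inl hx)
    obtain ⟨a, rfl⟩ := D.exists_revArrow_eq hR y (.inr hy)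
    exact ⟨⟨(a.1, b.1), hy, hx, fun h => hne h.symm⟩, rfl⟩

theorem toWalk_revPath (G : QMap R Q) (p : PathThrough R k) :
    ((phiQMap _ k).comp ((mutMap R K k D).comp G)).toWalk (.inr (.inr (D.revPath p))) =
      (((phiQMap R k).comp G).toWalk (.inr (.inr p))).inv := by
  rw [phiQMap_comp_toWalk_composite, phiQMap_comp_toWalk_composite]
  simp only [TwoCycleDeletion.revPath, mutMap_comp_toWalk_revArrow]
  exact (Walk.inv_comp_cast _ _ _).symm

theorem encard_compositesOver_mutMap_comp (hR : R.LoopFree) (hH : IsHomotopy Q H)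
    (G : QMap R Q) {i j : V} (w : Walk Q i j) :
    (((mutMap R K k D).comp G).compositesOver k H w).encard =
      (G.compositesOver k H w.inv).encard := by
  rw [← Set.encard_preimage_of_bijective (D.revPath_bijective hR)]
  congr 1
  ext p
  exact hH.mem_arrowsOver_congr_inv rfl rfl (toWalk_revPath D G p ▸ hH.hequiv_refl _) w

end Mutation

namespace TwoCycleDeletion

variable {Q R : Quiv V} {H : HSet Q} {k : V} {K : HSet R} (D : TwoCycleDeletion R K k)

theorem fst_ne_snd {q : R.Arrow × R.Arrow} (hq : q ∈ D.pairs) : q.1 ≠ q.2 := by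
  intro h
  have h₁ := (D.endpoints q hq).1
  rw [← h] at h₁
  exact D.src_ne_tgt q hq h₁.symm

theorem encard_inter_deleted (B : Set R.Arrow) :
    (B ∩ D.deleted).encard = {q ∈ D.pairs | q.1 ∈ B}.encard + {q ∈ D.pairs | q.2 ∈ B}.encard := by
  have hfst : Set.InjOn Prod.fst D.pairs := fun q hq q' hq' h => by
    by_contra hne
    exact (D.disjoint q hq q' hq' hne).1 h
  have hsnd : Set.InjOn Prod.snd D.pairs := fun q hq q' hq' h => by
    by_contra hne
    exact (D.disjoint q hq q' hq' hne).2.2.2 h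
  have hdisj : Disjoint (Prod.fst '' {q ∈ D.pairs | q.1 ∈ B})
      (Prod.snd '' {q ∈ D.pairs | q.2 ∈ B}) := by
    refine Set.disjoint_left.mpr ?_
    rintro _ ⟨q, ⟨hq, -⟩, rfl⟩ ⟨q', ⟨hq', -⟩, h⟩
    by_cases hqq : q' = q
    · exact D.fst_ne_snd hq (hqq ▸ h).symm
    · exact (D.disjoint q' hq' q hq hqq).2.2.1 h
  have hunion : B ∩ D.deleted =
      Prod.fst '' {q ∈ D.pairs | q.1 ∈ B} ∪ Prod.snd '' {q ∈ D.pairs | q.2 ∈ B} := by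
    ext x
    constructor
    · rintro ⟨hx, q, hq, rfl | rfl⟩
      exacts [.inl ⟨q, ⟨hq, hx⟩, rfl⟩, .inr ⟨q, ⟨hq, hx⟩, rfl⟩]
    · rintro (⟨q, ⟨hq, hx⟩, rfl⟩ | ⟨q, ⟨hq, hx⟩, rfl⟩)
      exacts [⟨hx, q, hq, .inl rfl⟩, ⟨hx, q, hq, .inr rfl⟩]
  rw [hunion, Set.encard_union_eq hdisj, (hfst.mono fun _ h => h.1).encard_image,
    (hsnd.mono fun _ h => h.1).encard_image]

/-- The two arrows of a deleted `2`-cycle lie over mutually inverse morphisms of `π(Q)/H`. -/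
theorem encard_arrowsOver_inter_deleted_inv (hH : IsHomotopy Q H) (G : QMap R Q)
    (hK : ∀ v, K v ⊆ kerH G H v) {i j : V} (w : Walk Q i j) :
    (G.arrowsOver H w.inv ∩ D.deleted).encard = (G.arrowsOver H w ∩ D.deleted).encard := by
  have hpair {q : R.Arrow × R.Arrow} (hq : q ∈ D.pairs) {i' j' : V} (u : Walk Q i' j') :
      q.1 ∈ G.arrowsOver H u ↔ q.2 ∈ G.arrowsOver H u.inv :=
    hH.mem_arrowsOver_iff_of_twoCycle_mem
      (hK _ (D.mem_H q hq (D.endpoints q hq).1 (D.endpoints q hq).2)) u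
  rw [encard_inter_deleted, encard_inter_deleted, add_comm]
  congr 2 <;> ext q <;> exact and_congr_right fun hq => by simp only [hpair hq, Walk.inv_inv]

end TwoCycleDeletion

theorem IsReducedH.encard_arrowsOver_eq_zero_or {Q : Quiv V} {H : HSet Q}
    (hred : IsReducedH Q H) (hH : IsHomotopy Q H) {i j : V} (w : Walk Q i j) :
    ((idQMap Q).arrowsOver H w).encard = 0 ∨ ((idQMap Q).arrowsOver H w.inv).encard = 0 := by
  simp only [Set.encard_eq_zero, ← Set.not_nonempty_iff_eq_empty, ← not_and_or]
  rintro ⟨⟨γ, hγ⟩, ⟨δ, hδ⟩⟩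
  obtain ⟨h, h', hcyc⟩ := hH.twoCycle_mem_kerH_of_mem_arrowsOver hγ hδ
  exact hred γ δ h h' (by simpa [kerH] using hcyc)

/-- The bookkeeping of the generic case: `n, m, a` count the arrows over `[w]` of `Q♥`, `Q†`, `Q`,
`c` the composites of `μ̃_k Q` over `[w]`, `d₁, d₂` the arrows over `[w]` deleted in the two
mutations; primed letters are the same counts over `[w⁻¹]`. -/
theorem eq_of_mutation_counts {n n' m m' a a' c c' d₁ d₁' d₂ d₂' : ℕ∞}
    (h₂ : n + d₂ = m + c') (h₂' : n' + d₂' = m' + c) (h₁ : m + d₁ = a + c)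
    (h₁' : m' + d₁' = a' + c') (hd₁ : d₁' = d₁) (hd₂ : d₂' = d₂) (hn : n = 0 ∨ n' = 0)
    (ha : a = 0 ∨ a' = 0) (ha_top : a ≠ ⊤) (ha'_top : a' ≠ ⊤) (hc : c ≠ ⊤) (hc' : c' ≠ ⊤) :
    n = a := by
  subst d₁' d₂'
  obtain ⟨hm, hd₁⟩ := WithTop.add_ne_top.mp (h₁ ▸ WithTop.add_ne_top.mpr ⟨ha_top, hc⟩)
  obtain ⟨hm', -⟩ := WithTop.add_ne_top.mp (h₁' ▸ WithTop.add_ne_top.mpr ⟨ha'_top, hc'⟩)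
  obtain ⟨hn_top, hd₂⟩ := WithTop.add_ne_top.mp (h₂ ▸ WithTop.add_ne_top.mpr ⟨hm, hc'⟩)
  obtain ⟨hn'_top, -⟩ := WithTop.add_ne_top.mp (h₂' ▸ WithTop.add_ne_top.mpr ⟨hm', hc⟩)
  lift n to ℕ using hn_top
  lift n' to ℕ using hn'_top
  lift m to ℕ using hm
  lift m' to ℕ using hm'
  lift a to ℕ using ha_top
  lift a' to ℕ using ha'_top
  lift c to ℕ using hc
  lift c' to ℕ using hc'
  lift d₁ to ℕ using hd₁
  lift d₂ to ℕ using hd₂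
  norm_cast at *
  omega

section Involution

variable {Q : Quiv V} {H : HSet Q} {k : V} (D₁ : TwoCycleDeletion (preMut Q k) (preH Q H k) k)

theorem preH_mutQuiv_eq_kerH :
    preH (mutQuiv Q H k D₁) (mutH Q H k D₁) k =
      kerH ((phiQMap (mutQuiv Q H k D₁) k).comp (mutMap Q H k D₁)) H :=
  (congrArg (kerH _) (mutH_eq_kerH D₁)).trans (kerH_comp _ _ _)

variable (D₂ : TwoCycleDeletion (preMut (mutQuiv Q H k D₁) k)
  (preH (mutQuiv Q H k D₁) (mutH Q H k D₁) k) k)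

theorem mutH_mutH_eq_kerH :
    mutH (mutQuiv Q H k D₁) (mutH Q H k D₁) k D₂ =
      kerH ((mutMap (mutQuiv Q H k D₁) (mutH Q H k D₁) k D₂).comp (mutMap Q H k D₁)) H :=
  (mutH_eq_kerH D₂).trans ((congrArg (kerH _) (mutH_eq_kerH D₁)).trans (kerH_comp _ _ _))

variable (hH : IsHomotopy Q H) (hloop : Q.LoopFree)
include hH hloop

theorem encard_arrowsOver_mutMap_mutMap_of_incident {i j : V} (hij : i = k ∨ j = k)
    (w : Walk Q i j) :
    (((mutMap (mutQuiv Q H k D₁) (mutH Q H k D₁) k D₂).comp (mutMap Q H k D₁)).arrowsOver H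
      w).encard = ((idQMap Q).arrowsOver H w).encard := by
  calc _ = ((mutMap Q H k D₁).arrowsOver H w.inv).encard :=
        encard_arrowsOver_mutMap_comp_of_incident D₂ (mutQuiv_loopFree hloop D₁) hH _ hij w
    _ = (((mutMap Q H k D₁).comp (idQMap Q)).arrowsOver H w.inv).encard := by
        rw [QMap.comp_id]
    _ = ((idQMap Q).arrowsOver H w.inv.inv).encard :=
        encard_arrowsOver_mutMap_comp_of_incident D₁ hloop hH _ hij.symm w.inv
    _ = _ := by rw [Walk.inv_inv]

theorem encard_arrowsOver_mutMap_mutMap_of_ne (hlf : Q.LocallyFinite) (hred : IsReducedH Q H)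
    (hD₂ : D₂.Maximal) {i j : V} (hij : i ≠ j) (hi : i ≠ k) (hj : j ≠ k) (w : Walk Q i j) :
    (((mutMap (mutQuiv Q H k D₁) (mutH Q H k D₁) k D₂).comp (mutMap Q H k D₁)).arrowsOver H
      w).encard = ((idQMap Q).arrowsOver H w).encard := by
  set G₁ := mutMap Q H k D₁
  have hK₂ := preH_mutQuiv_eq_kerH D₁
  have s₂ := encard_arrowsOver_mutMap_comp_add (H := H) D₂ G₁ hi hj w
  have s₂' := encard_arrowsOver_mutMap_comp_add (H := H) D₂ G₁ hj hi w.inv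
  have s₁ := encard_arrowsOver_mutMap_comp_add (H := H) D₁ (idQMap Q) hi hj w
  have s₁' := encard_arrowsOver_mutMap_comp_add (H := H) D₁ (idQMap Q) hj hi w.inv
  simp only [QMap.comp_id] at s₁ s₁'
  have c₂ := encard_compositesOver_mutMap_comp D₁ hloop hH (idQMap Q) w
  have c₂' := encard_compositesOver_mutMap_comp D₁ hloop hH (idQMap Q) w.inv
  simp only [QMap.comp_id, Walk.inv_inv] at c₂ c₂'
  have d₁ := D₁.encard_arrowsOver_inter_deleted_inv hH (phiQMap Q k) (fun _ => subset_rfl) w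
  have d₂ := D₂.encard_arrowsOver_inter_deleted_inv hH
    ((phiQMap (mutQuiv Q H k D₁) k).comp G₁) (fun v => (congrFun hK₂ v).subset) w
  have hn := hD₂.encard_arrowsOver_mutMap_comp_eq_zero_or hH G₁
    (fun v => (congrFun hK₂ v).symm.subset) hij hi hj w
  rw [c₂] at s₂
  rw [c₂'] at s₂'
  exact eq_of_mutation_counts s₂ s₂' s₁ s₁' d₁ d₂ hn (hred.encard_arrowsOver_eq_zero_or hH w)
    ((idQMap Q).finite_arrowsOver w (hlf i).1).encard_lt_top.ne
    ((idQMap Q).finite_arrowsOver w.inv (hlf j).1).encard_lt_top.ne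
    ((idQMap Q).finite_compositesOver w (hlf k).1 (hlf i).1).encard_lt_top.ne
    ((idQMap Q).finite_compositesOver w.inv (hlf k).1 (hlf j).1).encard_lt_top.ne

theorem encard_arrowsOver_mutMap_mutMap (hlf : Q.LocallyFinite) (hred : IsReducedH Q H)
    (hD₂ : D₂.Maximal) {i j : V} (w : Walk Q i j) :
    (((mutMap (mutQuiv Q H k D₁) (mutH Q H k D₁) k D₂).comp (mutMap Q H k D₁)).arrowsOver H
      w).encard = ((idQMap Q).arrowsOver H w).encard := by
  by_cases hij : i = k ∨ j = k
  · exact encard_arrowsOver_mutMap_mutMap_of_incident D₁ D₂ hH hloop hij w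
  obtain ⟨hi, hj⟩ := not_or.mp hij
  obtain rfl | hne := eq_or_ne i j
  · rw [QMap.arrowsOver_eq_empty_of_loopFree (mutQuiv_loopFree (mutQuiv_loopFree hloop D₁) D₂),
      QMap.arrowsOver_eq_empty_of_loopFree hloop, Set.encard_empty, Set.encard_empty]
  · exact encard_arrowsOver_mutMap_mutMap_of_ne D₁ D₂ hH hloop hlf hred hD₂ hne hi hj w

end Involution

end CMu

namespace CMu

theorem mutation_involutive_general {V : Type} (Q : Quiv V) (H : HSet Q) (k : V)
    (hlf : Q.LocallyFinite) (hloop : Q.LoopFree)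
    (hH : IsHomotopy Q H) (hred : IsReducedH Q H)
    (D₁ : TwoCycleDeletion (preMut Q k) (preH Q H k) k)
    (D₂ : TwoCycleDeletion (preMut (mutQuiv Q H k D₁) k)
      (preH (mutQuiv Q H k D₁) (mutH Q H k D₁) k) k) (hD₂ : D₂.Maximal) :
    ∃ η : QIso (mutQuiv (mutQuiv Q H k D₁) (mutH Q H k D₁) k D₂) Q,
      ∀ (v : V) (w : Walk (mutQuiv (mutQuiv Q H k D₁) (mutH Q H k D₁) k D₂) v v),
        w ∈ mutH (mutQuiv Q H k D₁) (mutH Q H k D₁) k D₂ v ↔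
          η.toQMap.mapWalk w ∈ H v := by
  rw [mutH_mutH_eq_kerH D₁ D₂]
  exact hH.exists_qIso_kerH_eq _ (fun w => (idQMap Q).finite_arrowsOver w (hlf _).1)
    (encard_arrowsOver_mutMap_mutMap D₁ D₂ hH hloop hlf hred hD₂)

/-- **Mutation of quivers with reduced homotopies is an involution** (Proposition
`prop: mutation involutive`).  Let `(Q, H)` be a loop-free quiver with reduced homotopy and
`k` a vertex.  Let `(Q†, H†) = μ_k(Q, H)` be a mutation of `(Q, H)` at `k` (given by a maximal
deletion `D₁` of `2`-cycles lying in `H'` from the pre-mutation), and let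
`(Q♥, H♥) = μ_k(Q†, H†)` be a mutation of the result at `k` again (given by a maximal
deletion `D₂`).  Then there is a quiver isomorphism `η : Q♥ → Q` fixing the vertex set whose
induced isomorphism of free groupoids sends `H♥` onto `H`. -/
theorem mutation_involutive {V : Type} (Q : Quiv V) (H : HSet Q) (k : V)
    (hlf : Q.LocallyFinite) (hloop : Q.LoopFree)
    (hH : IsHomotopy Q H) (hred : IsReducedH Q H)
    (D₁ : TwoCycleDeletion (preMut Q k) (preH Q H k) k) (hD₁ : D₁.Maximal)
    (D₂ : TwoCycleDeletion (preMut (mutQuiv Q H k D₁) k)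
      (preH (mutQuiv Q H k D₁) (mutH Q H k D₁) k) k) (hD₂ : D₂.Maximal) :
    ∃ η : QIso (mutQuiv (mutQuiv Q H k D₁) (mutH Q H k D₁) k D₂) Q,
      ∀ (v : V) (w : Walk (mutQuiv (mutQuiv Q H k D₁) (mutH Q H k D₁) k D₂) v v),
        w ∈ mutH (mutQuiv Q H k D₁) (mutH Q H k D₁) k D₂ v ↔
          η.toQMap.mapWalk w ∈ H v :=
  mutation_involutive_general Q H k hlf hloop hH hred D₁ D₂ hD₂

end CMu
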